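/- arXiv:2010.08378 — 7 statements merged into one kernel-verified Lean document; each statement's English description precedes it below -/
import Mathlib

section
/- Let f ∈ M = ⟨x_1,...,x_n⟩ with Lin_M(f) ≠ 0 and let z ∈ indets(Lin_M(f)). Then f is z-separating (i.e., z does not divide any term in the support of tail_z(f) = z - (1/c)f, where c is the coefficient of z in f) if and only if there exists a term ordering σ on P such that z = LT_σ(f). -/
open MvPolynomial

/-- A term ordering on the monomials of `K[x_1,...,x_n]`: a linear order on
exponent vectors compatible with addition and with `1` as smallest term. -/
structure TermOrder (n : ℕ) where
  le : (Fin n →₀ ℕ) → (Fin n →₀ ℕ) → Prop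
  le_refl : ∀ m, le m m
  le_trans : ∀ a b c, le a b → le b c → le a c
  le_antisymm : ∀ a b, le a b → le b a → a = b
  le_total : ∀ a b, le a b ∨ le b a
  add_le_add : ∀ a b c, le a b → le (a + c) (b + c)
  zero_le : ∀ m, le 0 m

variable {K : Type*} [Field K] {n s : ℕ}

/-- `m` is the `σ`-leading term of `f`. -/
def TermOrder.IsLeadingTerm (σ : TermOrder n) (f : MvPolynomial (Fin n) K)
    (m : Fin n →₀ ℕ) : Prop :=
  m ∈ f.support ∧ ∀ m' ∈ f.support, σ.le m' m

/-- `G` is a `σ`-Gröbner basis of the set `S` (typically an ideal or an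
elimination ideal): `G ⊆ S` and the leading term of every nonzero element of `S`
is divisible by the leading term of some element of `G`. -/
def IsGBOn (σ : TermOrder n) (S G : Set (MvPolynomial (Fin n) K)) : Prop :=
  G ⊆ S ∧ ∀ f ∈ S, f ≠ 0 → ∃ g ∈ G, ∃ mg mf, σ.IsLeadingTerm g mg ∧
    σ.IsLeadingTerm f mf ∧ mg ≤ mf

/-- `G` is the reduced `σ`-Gröbner basis of `S`: a monic, fully interreduced
`σ`-Gröbner basis. -/
def IsReducedGBOn (σ : TermOrder n) (S G : Set (MvPolynomial (Fin n) K)) : Prop :=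
  IsGBOn σ S G ∧
  (∀ g ∈ G, ∃ m, σ.IsLeadingTerm g m ∧ MvPolynomial.coeff m g = 1) ∧
  (∀ g ∈ G, ∀ m ∈ g.support, ∀ g' ∈ G, ∀ m', σ.IsLeadingTerm g' m' → m' ≤ m →
    g' = g ∧ m' = m)

/-- The indeterminate `z` divides some term in the support of `f`. -/
def Occurs (z : Fin n) (f : MvPolynomial (Fin n) K) : Prop :=
  ∃ m ∈ f.support, m z ≠ 0

/-- `tail_z(f) = z - (1/c) f`, where `c` is the coefficient of `z` in `f`. -/
noncomputable def tailTo (f : MvPolynomial (Fin n) K) (z : Fin n) :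
    MvPolynomial (Fin n) K :=
  X z - (MvPolynomial.coeff (Finsupp.single z 1) f)⁻¹ • f

/-- `f` is `z`-separating: the coefficient of `z` in `f` is nonzero and `z`
divides no term in the support of `tail_z(f)`. -/
def IsSeparating (f : MvPolynomial (Fin n) K) (z : Fin n) : Prop :=
  MvPolynomial.coeff (Finsupp.single z 1) f ≠ 0 ∧ ¬ Occurs z (tailTo f z)

/-- `(f_1,...,f_s)` is coherently `Z`-separating for `Z = {z_1,...,z_s}`. -/
def CoherentlySeparating (z : Fin s → Fin n) (f : Fin s → MvPolynomial (Fin n) K) : Prop :=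
  Function.Injective z ∧ (∀ i, f i ≠ 0 ∧ IsSeparating (f i) (z i)) ∧
  ∀ i j, j ≠ i → ¬ Occurs (z i) (f j)

/-- The `M`-linear part of `f` for `M = ⟨x_1-a_1,...,x_n-a_n⟩`. -/
noncomputable def linPart (a : Fin n → K) (f : MvPolynomial (Fin n) K) :
    MvPolynomial (Fin n) K :=
  (MvPolynomial.aeval fun i => X i - C (a i))
    (MvPolynomial.homogeneousComponent 1 ((MvPolynomial.aeval fun i => X i + C (a i)) f))

/-- The `M`-linear part of an ideal `I`: the `K`-span of `{Lin_M(f) : f ∈ I}`. -/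
noncomputable def linSpace (a : Fin n → K) (I : Ideal (MvPolynomial (Fin n) K)) :
    Submodule K (MvPolynomial (Fin n) K) :=
  Submodule.span K (linPart a '' (I : Set (MvPolynomial (Fin n) K)))

/-- The linear maximal ideal `M = ⟨x_1-a_1,...,x_n-a_n⟩`. -/
noncomputable def linMaxIdeal (a : Fin n → K) : Ideal (MvPolynomial (Fin n) K) :=
  Ideal.span (Set.range fun i => X i - C (a i))

/-- `M_1`, the `K`-vector space spanned by `x_1-a_1,...,x_n-a_n`. -/
noncomputable def linForms (a : Fin n → K) : Submodule K (MvPolynomial (Fin n) K) :=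
  Submodule.span K (Set.range fun i => X i - C (a i))

/-- The elimination ideal `I ∩ K[X∖Z]`, viewed as the set of polynomials of `I`
in which no indeterminate of `Z` occurs. -/
def elimSet (z : Fin s → Fin n) (I : Ideal (MvPolynomial (Fin n) K)) :
    Set (MvPolynomial (Fin n) K) :=
  {p | p ∈ I ∧ ∀ i, ¬ Occurs (z i) p}

/-- `r` is the normal form of `p` with respect to (the reduced Gröbner basis of)
`S`: `p - r ∈ S` and no term of `r` is divisible by a leading term of `S`. -/
def IsNormalFormOn (σ : TermOrder n) (S : Set (MvPolynomial (Fin n) K))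
    (p r : MvPolynomial (Fin n) K) : Prop :=
  p - r ∈ S ∧ ∀ f ∈ S, f ≠ 0 → ∀ mf m, σ.IsLeadingTerm f mf → m ∈ r.support → ¬ mf ≤ m

/-- `σ` is a `Z`-separating term ordering for `I`. -/
def IsZSepOrder (σ : TermOrder n) (z : Fin s → Fin n)
    (I : Ideal (MvPolynomial (Fin n) K)) : Prop :=
  ∃ p : Fin s → MvPolynomial (Fin n) K,
    (∀ i, p i ∈ I ∧ p i ≠ 0 ∧ σ.IsLeadingTerm (p i) (Finsupp.single (z i) 1)) ∧
    CoherentlySeparating z p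

open Classical in
/-- The substitution `x_i ↦ x_i` for `x_i ∉ Z` and `z_j ↦ tail_{z_j}(f_j)`. -/
noncomputable def subMap (z : Fin s → Fin n) (f : Fin s → MvPolynomial (Fin n) K)
    (i : Fin n) : MvPolynomial (Fin n) K :=
  if h : ∃ j, z j = i then tailTo (f h.choose) (z h.choose) else X i

open Classical in
/-- The projection of `P` onto `P̂ = K[X∖Z]`. -/
noncomputable def killZ (z : Fin s → Fin n) :
    MvPolynomial (Fin n) K →ₐ[K] MvPolynomial {i : Fin n // ¬ ∃ j, z j = i} K :=
  MvPolynomial.aeval fun i => if h : ∃ j, z j = i then 0 else X ⟨i, h⟩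

/-- The elimination ideal `I ∩ P̂` as an ideal of `P̂ = K[X∖Z]`. -/
noncomputable def elimIdeal (z : Fin s → Fin n) (I : Ideal (MvPolynomial (Fin n) K)) :
    Ideal (MvPolynomial {i : Fin n // ¬ ∃ j, z j = i} K) :=
  Ideal.comap (MvPolynomial.rename
    (Subtype.val : {i : Fin n // ¬ ∃ j, z j = i} → Fin n)).toRingHom I

/-- The composition `ψ : P → P̂ → P̂/(I ∩ P̂)` of the substitution
`z_j ↦ tail_{z_j}(f_j)` with the canonical projection. -/
noncomputable def reembedHom (z : Fin s → Fin n) (f : Fin s → MvPolynomial (Fin n) K)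
    (I : Ideal (MvPolynomial (Fin n) K)) :
    MvPolynomial (Fin n) K →+*
      (MvPolynomial {i : Fin n // ¬ ∃ j, z j = i} K ⧸ elimIdeal z I) :=
  (Ideal.Quotient.mk (elimIdeal z I)).comp
    (((killZ z).comp (MvPolynomial.aeval (subMap z f))).toRingHom)

/-- The cotangent space `m/m²` as a `K`-vector space. -/
abbrev cotSpace (K : Type*) [Field K] {R : Type*} [CommRing R] [Algebra K R]
    (m : Ideal R) :=
  (m.restrictScalars K) ⧸
    Submodule.comap (Submodule.subtype (m.restrictScalars K)) ((m ^ 2).restrictScalars K)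

/-- The embedding dimension of an affine `K`-algebra `R`: the minimal number `m`
of indeterminates of a presentation `R ≅ K[y_1,...,y_m]/I'`. -/
noncomputable def edim (K : Type*) [Field K] (R : Type*) [CommRing R] [Algebra K R] : ℕ :=
  sInf {m | ∃ I' : Ideal (MvPolynomial (Fin m) K),
    Nonempty (R ≃ₐ[K] (MvPolynomial (Fin m) K ⧸ I'))}

/-- A marked reduced Gröbner basis of `I`: a reduced `σ`-Gröbner basis together
with the marking of the `σ`-leading term of each element. -/
def IsMarkedReducedGB (I : Ideal (MvPolynomial (Fin n) K))
    (G : Set ((Fin n →₀ ℕ) × MvPolynomial (Fin n) K)) : Prop :=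
  ∃ σ : TermOrder n, IsReducedGBOn σ (I : Set (MvPolynomial (Fin n) K)) (Prod.snd '' G) ∧
    ∀ p ∈ G, σ.IsLeadingTerm p.2 p.1

/-!
Once the coefficient `c` of `z` in `f` is nonzero, the support of `tail_z(f)` is that of `f`
with the term `z` removed, so `f` is `z`-separating iff `z` divides no other term of `f`.
In that case the lexicographic order that compares exponents of `z` first makes `z` the
leading term. Conversely, every term order refines divisibility, so a leading term `z` of `f`
divides no other term of `f`. If `c = 0`, then `tail_z(f) = z` and `z` is not a term of `f`,
so both sides fail.
-/

namespace TermOrder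

def ofInjective {L : Type*} [AddCommMonoid L] [LinearOrder L] [IsOrderedAddMonoid L]
    (φ : (Fin n →₀ ℕ) →+ L) (hφ : Function.Injective φ) (hφ0 : ∀ m, 0 ≤ φ m) :
    TermOrder n where
  le a b := φ a ≤ φ b
  le_refl _ := le_rfl
  le_trans _ _ _ := _root_.le_trans
  le_antisymm _ _ hab hba := hφ (_root_.le_antisymm hab hba)
  le_total _ _ := _root_.le_total _ _
  add_le_add a b c h := by simpa only [map_add] using add_le_add_left h (φ c)
  zero_le m := by simpa only [map_zero] using hφ0 m

noncomputable def zFirstLex (z : Fin n) : TermOrder n :=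
  ofInjective
    { toFun := fun m => toLex (m z, toLex m), map_zero' := rfl, map_add' := fun _ _ => rfl }
    (fun _ _ h => toLex.injective (congrArg (fun p => (ofLex p).2) h))
    (fun m => by
      rcases (m z).eq_zero_or_pos with hm | hm
      · exact Prod.Lex.toLex_le_toLex.2 (Or.inr ⟨hm.symm, bot_le⟩)
      · exact Prod.Lex.toLex_le_toLex.2 (Or.inl hm))

theorem zFirstLex_le_single {z : Fin n} {m : Fin n →₀ ℕ} (hm : m z = 0) :
    (zFirstLex z).le m (Finsupp.single z 1) :=
  Prod.Lex.toLex_le_toLex.2 (Or.inl (by simp [hm]))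

theorem le_of_le (σ : TermOrder n) {a b : Fin n →₀ ℕ} (h : a ≤ b) : σ.le a b := by
  simpa [tsub_add_cancel_of_le h] using σ.add_le_add 0 (b - a) a (σ.zero_le _)

theorem IsLeadingTerm.eq_of_le {σ : TermOrder n} {f : MvPolynomial (Fin n) K}
    {m m' : Fin n →₀ ℕ} (hf : σ.IsLeadingTerm f m) (hm' : m' ∈ f.support) (h : m ≤ m') :
    m' = m :=
  σ.le_antisymm _ _ (hf.2 m' hm') (σ.le_of_le h)

end TermOrder

theorem occurs_X (z : Fin n) : Occurs z (X z : MvPolynomial (Fin n) K) :=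
  ⟨Finsupp.single z 1, by simp [support_X], by simp⟩

theorem tailTo_of_coeff_eq_zero {f : MvPolynomial (Fin n) K} {z : Fin n}
    (hc : coeff (Finsupp.single z 1) f = 0) : tailTo f z = X z := by
  simp [tailTo, hc]

theorem mem_support_tailTo_iff {f : MvPolynomial (Fin n) K} {z : Fin n}
    (hc : coeff (Finsupp.single z 1) f ≠ 0) {m : Fin n →₀ ℕ} :
    m ∈ (tailTo f z).support ↔ m ∈ f.support ∧ m ≠ Finsupp.single z 1 := by
  rcases eq_or_ne m (Finsupp.single z 1) with rfl | hm
  · simp [tailTo, coeff_X, hc]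
  · simp [tailTo, coeff_X, Ne.symm hm, hm, hc]

theorem not_occurs_tailTo_iff {f : MvPolynomial (Fin n) K} {z : Fin n}
    (hc : coeff (Finsupp.single z 1) f ≠ 0) :
    ¬ Occurs z (tailTo f z) ↔ ∀ m ∈ f.support, m z ≠ 0 → m = Finsupp.single z 1 := by
  simp only [Occurs, mem_support_tailTo_iff hc]
  grind

theorem statement6_general (f : MvPolynomial (Fin n) K) (z : Fin n) :
    ¬ Occurs z (tailTo f z) ↔
      ∃ σ : TermOrder n, σ.IsLeadingTerm f (Finsupp.single z 1) := by
  by_cases hc : coeff (Finsupp.single z 1) f = 0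
  · rw [tailTo_of_coeff_eq_zero hc]
    exact iff_of_false (not_not_intro (occurs_X z))
      fun ⟨_, hσ⟩ => mem_support_iff.1 hσ.1 hc
  rw [not_occurs_tailTo_iff hc]
  constructor
  · intro hsep
    refine ⟨TermOrder.zFirstLex z, mem_support_iff.2 hc, fun m hm => ?_⟩
    by_cases hmz : m z = 0
    · exact TermOrder.zFirstLex_le_single hmz
    · exact hsep m hm hmz ▸ (TermOrder.zFirstLex z).le_refl _
  · rintro ⟨σ, hσ⟩ m hm hmz
    exact hσ.eq_of_le hm (Finsupp.single_le_iff.2 (Nat.one_le_iff_ne_zero.2 hmz))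

/-- For `f ∈ M = ⟨x_1,...,x_n⟩` with `Lin_M(f) ≠ 0` and `z` an
indeterminate of `Lin_M(f)`: `f` is `z`-separating iff `z` is the `σ`-leading term
of `f` for some term ordering `σ`. -/
theorem statement6 (f : MvPolynomial (Fin n) K) (hf : f ∈ linMaxIdeal (0 : Fin n → K))
    (hlin : linPart (0 : Fin n → K) f ≠ 0) (z : Fin n)
    (hz : MvPolynomial.coeff (Finsupp.single z 1) (linPart (0 : Fin n → K) f) ≠ 0) :
    ¬ Occurs z (tailTo f z) ↔
      ∃ σ : TermOrder n, σ.IsLeadingTerm f (Finsupp.single z 1) :=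
  statement6_general f z
end

section
/- Let Z = {z_1,...,z_s} be distinct indeterminates of P = K[x_1,...,x_n] and f_1,...,f_s ∈ M∖{0} with M = ⟨x_1,...,x_n⟩. If the tuple (f_1,...,f_s) is coherently Z-separating, then for every term ordering σ with z_i = LT_σ(f_i) for all i, the set { (1/c_1)f_1, ..., (1/c_s)f_s } with c_i = LC_σ(f_i) is the reduced σ-Gröbner basis of the ideal ⟨f_1,...,f_s⟩. -/
open MvPolynomial

variable {K : Type*} [Field K] {n s : ℕ}

section Statement7Aux

private lemma TermOrder.le_add_le (σ : TermOrder n) {a b c d : Fin n →₀ ℕ}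
    (h1 : σ.le a b) (h2 : σ.le c d) : σ.le (a + c) (b + d) := by
  refine σ.le_trans _ (b + c) _ (σ.add_le_add _ _ _ h1) ?_
  rw [add_comm b c, add_comm b d]
  exact σ.add_le_add _ _ _ h2

/-- All monomials of `q` are `σ`-bounded by `m`. -/
private def Bnd (σ : TermOrder n) (m : Fin n →₀ ℕ) (q : MvPolynomial (Fin n) K) : Prop :=
  ∀ μ ∈ q.support, σ.le μ m

private lemma bnd_mul {σ : TermOrder n} {a b : Fin n →₀ ℕ} {q r : MvPolynomial (Fin n) K}
    (hq : Bnd σ a q) (hr : Bnd σ b r) : Bnd σ (a + b) (q * r) := by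
  classical
  intro μ hμ
  have h := MvPolynomial.support_mul q r hμ
  rw [Finset.mem_add] at h
  obtain ⟨x, hx, y, hy, rfl⟩ := h
  exact σ.le_add_le (hq x hx) (hr y hy)

private lemma bnd_one {σ : TermOrder n} : Bnd σ 0 (1 : MvPolynomial (Fin n) K) := by
  intro μ hμ
  have : μ = 0 := by
    by_contra hne
    rw [MvPolynomial.mem_support_iff, MvPolynomial.coeff_one, if_neg fun h => hne h.symm] at hμ
    exact hμ rfl
  rw [this]
  exact σ.le_refl 0

private lemma bnd_pow {σ : TermOrder n} {a : Fin n →₀ ℕ} {q : MvPolynomial (Fin n) K}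
    (hq : Bnd σ a q) (k : ℕ) : Bnd σ (k • a) (q ^ k) := by
  induction k with
  | zero => simpa using bnd_one
  | succ k ih =>
    rw [succ_nsmul, pow_succ]
    exact bnd_mul ih hq

private lemma bnd_prod {σ : TermOrder n} (t : Finset (Fin n)) (g : Fin n → MvPolynomial (Fin n) K)
    (b : Fin n → (Fin n →₀ ℕ)) (h : ∀ i ∈ t, Bnd σ (b i) (g i)) :
    Bnd σ (∑ i ∈ t, b i) (∏ i ∈ t, g i) := by
  classical
  induction t using Finset.induction_on with
  | empty => simpa using bnd_one
  | @insert x t hx ih =>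
    rw [Finset.prod_insert hx, Finset.sum_insert hx]
    exact bnd_mul (h x (Finset.mem_insert_self x t))
      (ih fun i hi => h i (Finset.mem_insert_of_mem hi))

private lemma bnd_C {σ : TermOrder n} {a : Fin n →₀ ℕ} (c : K) :
    Bnd σ a (MvPolynomial.C c : MvPolynomial (Fin n) K) := by
  intro μ hμ
  have : μ = 0 := by
    by_contra hne
    rw [MvPolynomial.mem_support_iff, MvPolynomial.coeff_C, if_neg fun h => hne h.symm] at hμ
    exact hμ rfl
  rw [this]
  exact σ.zero_le a

private lemma tail_support {f0 : MvPolynomial (Fin n) K} {z0 : Fin n}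
    (hsep : IsSeparating f0 z0) {μ : Fin n →₀ ℕ} (hμ : μ ∈ (tailTo f0 z0).support) :
    μ z0 = 0 ∧ μ ∈ f0.support := by
  classical
  have hz : μ z0 = 0 := by
    by_contra h
    exact hsep.2 ⟨μ, hμ, h⟩
  refine ⟨hz, ?_⟩
  have hne : ¬ (Finsupp.single z0 1 = μ) := by
    intro h
    rw [← h] at hz
    simp at hz
  rw [MvPolynomial.mem_support_iff, tailTo, MvPolynomial.coeff_sub, MvPolynomial.coeff_smul,
    MvPolynomial.coeff_X', if_neg hne, zero_sub, neg_ne_zero, smul_eq_mul] at hμ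
  rw [MvPolynomial.mem_support_iff]
  exact fun h => hμ (by rw [h, mul_zero])

private lemma mem_support_z {f0 : MvPolynomial (Fin n) K} {z0 : Fin n}
    (hsep : IsSeparating f0 z0) {m : Fin n →₀ ℕ} (hm : m ∈ f0.support) (hz : m z0 ≠ 0) :
    m = Finsupp.single z0 1 := by
  classical
  by_contra hne
  apply hsep.2
  refine ⟨m, ?_, hz⟩
  rw [MvPolynomial.mem_support_iff, tailTo, MvPolynomial.coeff_sub, MvPolynomial.coeff_smul,
    MvPolynomial.coeff_X', if_neg fun h => hne h.symm, zero_sub, neg_ne_zero, smul_eq_mul]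
  exact mul_ne_zero (inv_ne_zero hsep.1) (MvPolynomial.mem_support_iff.mp hm)

private lemma tail_zfree (z : Fin s → Fin n) (f : Fin s → MvPolynomial (Fin n) K)
    (hcs : CoherentlySeparating z f) (i : Fin s) :
    ∀ j, ∀ μ ∈ (tailTo (f i) (z i)).support, μ (z j) = 0 := by
  intro j μ hμ
  obtain ⟨hz0, hμf⟩ := tail_support (hcs.2.1 i).2 hμ
  by_cases hji : j = i
  · rw [hji]; exact hz0
  · by_contra h
    exact hcs.2.2 j i (fun hij => hji hij.symm) ⟨μ, hμf, h⟩

private lemma subMap_z (z : Fin s → Fin n) (f : Fin s → MvPolynomial (Fin n) K)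
    (hz : Function.Injective z) (i : Fin s) :
    subMap z f (z i) = tailTo (f i) (z i) := by
  have h : ∃ j, z j = z i := ⟨i, rfl⟩
  rw [subMap, dif_pos h]
  have hc : h.choose = i := hz h.choose_spec
  rw [hc]

private lemma bnd_subMap (z : Fin s → Fin n) (f : Fin s → MvPolynomial (Fin n) K)
    (hcs : CoherentlySeparating z f) (σ : TermOrder n)
    (hlt : ∀ i, σ.IsLeadingTerm (f i) (Finsupp.single (z i) 1)) (i : Fin n) :
    Bnd σ (Finsupp.single i 1) (subMap z f i) := by
  by_cases h : ∃ j, z j = i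
  · rw [subMap, dif_pos h]
    intro μ hμ
    obtain ⟨_, hμf⟩ := tail_support (hcs.2.1 h.choose).2 hμ
    have := (hlt h.choose).2 μ hμf
    rwa [h.choose_spec] at this
  · rw [subMap, dif_neg h]
    intro μ hμ
    classical
    have : μ = Finsupp.single i 1 := by
      rwa [MvPolynomial.support_X, Finset.mem_singleton] at hμ
    rw [this]
    exact σ.le_refl _

private lemma bnd_aeval_monomial (z : Fin s → Fin n) (f : Fin s → MvPolynomial (Fin n) K)
    (hcs : CoherentlySeparating z f) (σ : TermOrder n)
    (hlt : ∀ i, σ.IsLeadingTerm (f i) (Finsupp.single (z i) 1)) (m : Fin n →₀ ℕ) (c : K) :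
    Bnd σ m (MvPolynomial.aeval (subMap z f) (MvPolynomial.monomial m c)) := by
  rw [MvPolynomial.aeval_monomial]
  have h0 : Bnd σ 0 ((algebraMap K (MvPolynomial (Fin n) K)) c) := by
    rw [MvPolynomial.algebraMap_eq]
    exact bnd_C c
  have hprod : Bnd σ (∑ i ∈ m.support, Finsupp.single i (m i))
      (∏ i ∈ m.support, subMap z f i ^ (m i)) := by
    refine bnd_prod _ _ _ fun i hi => ?_
    have := bnd_pow (bnd_subMap z f hcs σ hlt i) (m i)
    rwa [Finsupp.smul_single, smul_eq_mul, mul_one] at this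
  have hm : m = ∑ i ∈ m.support, Finsupp.single i (m i) := (Finsupp.sum_single m).symm
  have := bnd_mul h0 hprod
  rw [zero_add] at this
  rw [← hm] at this
  exact this

private lemma aeval_subMap_monomial (z : Fin s → Fin n) (f : Fin s → MvPolynomial (Fin n) K)
    (m : Fin n →₀ ℕ) (c : K) (hm : ∀ j, m (z j) = 0) :
    MvPolynomial.aeval (subMap z f) (MvPolynomial.monomial m c) = MvPolynomial.monomial m c := by
  rw [MvPolynomial.aeval_monomial]
  have hp : (m.prod fun i k => subMap z f i ^ k) =
      m.prod fun i k => (MvPolynomial.X i : MvPolynomial (Fin n) K) ^ k := by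
    apply Finsupp.prod_congr
    intro i hi
    have hne : ¬ ∃ j, z j = i := by
      rintro ⟨j, rfl⟩
      exact (Finsupp.mem_support_iff.mp hi) (hm j)
    rw [subMap, dif_neg hne]
  rw [hp, MvPolynomial.algebraMap_eq, ← MvPolynomial.monomial_eq]

private lemma aeval_subMap_zfree (z : Fin s → Fin n) (f : Fin s → MvPolynomial (Fin n) K)
    {q : MvPolynomial (Fin n) K} (hq : ∀ j, ∀ μ ∈ q.support, μ (z j) = 0) :
    MvPolynomial.aeval (subMap z f) q = q := by
  conv_lhs => rw [q.as_sum]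
  rw [map_sum]
  conv_rhs => rw [q.as_sum]
  exact Finset.sum_congr rfl fun m hm =>
    aeval_subMap_monomial z f m _ fun j => hq j m hm

private lemma aeval_subMap_f (z : Fin s → Fin n) (f : Fin s → MvPolynomial (Fin n) K)
    (hcs : CoherentlySeparating z f) (i : Fin s) :
    MvPolynomial.aeval (subMap z f) (f i) = 0 := by
  have hcne : MvPolynomial.coeff (Finsupp.single (z i) 1) (f i) ≠ 0 := (hcs.2.1 i).2.1
  have hfi : f i = MvPolynomial.C (MvPolynomial.coeff (Finsupp.single (z i) 1) (f i)) *
      (MvPolynomial.X (z i) - tailTo (f i) (z i)) := by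
    rw [tailTo, MvPolynomial.smul_eq_C_mul, sub_sub_cancel, ← mul_assoc, ← MvPolynomial.C_mul,
      mul_inv_cancel₀ hcne, MvPolynomial.C_1, one_mul]
  conv_lhs => rw [hfi]
  rw [map_mul, map_sub, MvPolynomial.aeval_X, subMap_z z f hcs.1 i,
    aeval_subMap_zfree z f (tail_zfree z f hcs i), sub_self, mul_zero]

private lemma mem_span_aeval (z : Fin s → Fin n) (f : Fin s → MvPolynomial (Fin n) K)
    (hcs : CoherentlySeparating z f) {p : MvPolynomial (Fin n) K}
    (hp : p ∈ Ideal.span (Set.range f)) :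
    MvPolynomial.aeval (subMap z f) p = 0 := by
  have hle : Ideal.span (Set.range f) ≤
      RingHom.ker (MvPolynomial.aeval (subMap z f) :
        MvPolynomial (Fin n) K →ₐ[K] MvPolynomial (Fin n) K).toRingHom := by
    rw [Ideal.span_le]
    rintro _ ⟨i, rfl⟩
    exact RingHom.mem_ker.mpr (aeval_subMap_f z f hcs i)
  exact RingHom.mem_ker.mp (hle hp)

private lemma finset_exists_max (σ : TermOrder n) (t : Finset (Fin n →₀ ℕ))
    (ht : t.Nonempty) : ∃ m ∈ t, ∀ m' ∈ t, σ.le m' m := by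
  classical
  induction t using Finset.induction_on with
  | empty => simp at ht
  | @insert a t ha ih =>
    rcases t.eq_empty_or_nonempty with rfl | ht'
    · refine ⟨a, Finset.mem_insert_self a ∅, fun m' hm' => ?_⟩
      rw [Finset.mem_insert] at hm'
      rcases hm' with rfl | hm'
      · exact σ.le_refl _
      · simp at hm'
    · obtain ⟨m, hm, hmax⟩ := ih ht'
      rcases σ.le_total a m with h | h
      · refine ⟨m, Finset.mem_insert_of_mem hm, fun m' hm' => ?_⟩
        rcases Finset.mem_insert.mp hm' with rfl | hm'
        exacts [h, hmax m' hm']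
      · refine ⟨a, Finset.mem_insert_self a t, fun m' hm' => ?_⟩
        rcases Finset.mem_insert.mp hm' with rfl | hm'
        exacts [σ.le_refl m', σ.le_trans _ _ _ (hmax m' hm') h]

private lemma lt_mem_z (z : Fin s → Fin n) (f : Fin s → MvPolynomial (Fin n) K)
    (hcs : CoherentlySeparating z f) (σ : TermOrder n)
    (hlt : ∀ i, σ.IsLeadingTerm (f i) (Finsupp.single (z i) 1))
    {p : MvPolynomial (Fin n) K} (hp : p ∈ Ideal.span (Set.range f))
    {mf : Fin n →₀ ℕ} (hmf : σ.IsLeadingTerm p mf) : ∃ i, mf (z i) ≠ 0 := by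
  by_contra h
  push_neg at h
  have hker : MvPolynomial.aeval (subMap z f) p = 0 := mem_span_aeval z f hcs hp
  have hsum : MvPolynomial.aeval (subMap z f) p =
      ∑ m ∈ p.support, MvPolynomial.aeval (subMap z f)
        (MvPolynomial.monomial m (MvPolynomial.coeff m p)) := by
    conv_lhs => rw [p.as_sum]
    exact map_sum _ _ _
  have hco : MvPolynomial.coeff mf (MvPolynomial.aeval (subMap z f) p) =
      MvPolynomial.coeff mf p := by
    rw [hsum, MvPolynomial.coeff_sum, Finset.sum_eq_single mf]
    · rw [aeval_subMap_monomial z f mf _ h, MvPolynomial.coeff_monomial, if_pos rfl]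
    · intro m hm hne
      by_contra hc
      have hmem : mf ∈ (MvPolynomial.aeval (subMap z f)
          (MvPolynomial.monomial m (MvPolynomial.coeff m p))).support :=
        MvPolynomial.mem_support_iff.mpr hc
      have h1 := bnd_aeval_monomial z f hcs σ hlt m (MvPolynomial.coeff m p) mf hmem
      exact hne (σ.le_antisymm _ _ (hmf.2 m hm) h1)
    · intro h'
      exact (h' hmf.1).elim
  rw [hker, MvPolynomial.coeff_zero] at hco
  exact (MvPolynomial.mem_support_iff.mp hmf.1) hco.symm

private lemma lt_unique {σ : TermOrder n} {p : MvPolynomial (Fin n) K} {m m' : Fin n →₀ ℕ}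
    (h : σ.IsLeadingTerm p m) (h' : σ.IsLeadingTerm p m') : m = m' :=
  σ.le_antisymm _ _ (h'.2 m h.1) (h.2 m' h'.1)

private lemma support_inv_smul {c : K} (hc : c ≠ 0) (p : MvPolynomial (Fin n) K) :
    (c⁻¹ • p).support = p.support :=
  MvPolynomial.support_smul_eq (inv_ne_zero hc) p

end Statement7Aux

/-- If `(f_1,...,f_s)` is coherently `Z`-separating, then for every
term ordering `σ` with `LT_σ(f_i) = z_i`, the set `{(1/c_1)f_1,...,(1/c_s)f_s}` is
the reduced `σ`-Gröbner basis of `⟨f_1,...,f_s⟩`. -/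
theorem statement7 (z : Fin s → Fin n) (f : Fin s → MvPolynomial (Fin n) K)
    (hfM : ∀ i, f i ∈ linMaxIdeal (0 : Fin n → K) ∧ f i ≠ 0)
    (hcs : CoherentlySeparating z f) (σ : TermOrder n)
    (hlt : ∀ i, σ.IsLeadingTerm (f i) (Finsupp.single (z i) 1)) :
    IsReducedGBOn σ ((Ideal.span (Set.range f) : Ideal (MvPolynomial (Fin n) K)) :
        Set (MvPolynomial (Fin n) K))
      (Set.range fun i =>
        (MvPolynomial.coeff (Finsupp.single (z i) 1) (f i))⁻¹ • f i) := by
  have hcne : ∀ i, MvPolynomial.coeff (Finsupp.single (z i) 1) (f i) ≠ 0 :=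
    fun i => (hcs.2.1 i).2.1
  have hsupp : ∀ i, ((MvPolynomial.coeff (Finsupp.single (z i) 1) (f i))⁻¹ • f i).support
      = (f i).support := fun i => support_inv_smul (hcne i) (f i)
  have hltg : ∀ i, σ.IsLeadingTerm
      ((MvPolynomial.coeff (Finsupp.single (z i) 1) (f i))⁻¹ • f i)
      (Finsupp.single (z i) 1) := by
    intro i
    refine ⟨?_, ?_⟩
    · rw [hsupp i]; exact (hlt i).1
    · intro m' hm'
      rw [hsupp i] at hm'
      exact (hlt i).2 m' hm'
  refine ⟨⟨?_, ?_⟩, ?_, ?_⟩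
  · -- G ⊆ I
    rintro _ ⟨i, rfl⟩
    have hmem : MvPolynomial.C (MvPolynomial.coeff (Finsupp.single (z i) 1) (f i))⁻¹ * f i ∈
        Ideal.span (Set.range f) := Ideal.mul_mem_left _ _ (Ideal.subset_span ⟨i, rfl⟩)
    show (MvPolynomial.coeff (Finsupp.single (z i) 1) (f i))⁻¹ • f i ∈ Ideal.span (Set.range f)
    rwa [MvPolynomial.smul_eq_C_mul]
  · -- GB condition
    intro p hp hp0
    have hne : p.support.Nonempty :=
      Finset.nonempty_iff_ne_empty.mpr fun h => hp0 (MvPolynomial.support_eq_empty.mp h)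
    obtain ⟨mf, hmem, hmax⟩ := finset_exists_max σ p.support hne
    have hmf : σ.IsLeadingTerm p mf := ⟨hmem, hmax⟩
    obtain ⟨i, hi⟩ := lt_mem_z z f hcs σ hlt hp hmf
    refine ⟨_, ⟨i, rfl⟩, Finsupp.single (z i) 1, mf, hltg i, hmf, ?_⟩
    rw [Finsupp.single_le_iff]
    exact Nat.one_le_iff_ne_zero.mpr hi
  · -- monic
    rintro _ ⟨i, rfl⟩
    refine ⟨Finsupp.single (z i) 1, hltg i, ?_⟩
    rw [MvPolynomial.coeff_smul, smul_eq_mul, inv_mul_cancel₀ (hcne i)]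
  · -- interreduced
    rintro _ ⟨i, rfl⟩ m hm _ ⟨j, rfl⟩ m' hm' hle
    have hm'eq : m' = Finsupp.single (z j) 1 := lt_unique hm' (hltg j)
    rw [hsupp i] at hm
    have hmzj : m (z j) ≠ 0 := by
      rw [hm'eq, Finsupp.single_le_iff] at hle
      exact Nat.one_le_iff_ne_zero.mp hle
    have hji : j = i := by
      by_contra hji
      exact hcs.2.2 j i (fun h => hji h.symm) ⟨m, hm, hmzj⟩
    subst hji
    refine ⟨rfl, ?_⟩
    rw [hm'eq, mem_support_z (hcs.2.1 j).2 hm hmzj]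
end

section
/- Let { (1/c_1)f_1, ..., (1/c_s)f_s, g_1, ..., g_t } be a Z-separating σ-Gröbner basis of an ideal I ⊆ M, and for each i let h_i be the normal form of tail_{z_i}(f_i) with respect to the reduced Gröbner basis of I ∩ P̂. Then the reduced σ-Gröbner basis of I is { z_1 - h_1, ..., z_s - h_s, g_1, ..., g_t }. -/
open MvPolynomial

variable {K : Type*} [Field K] {n s : ℕ}

/-- Any nonempty finite set of monomials has a `σ`-maximum. -/
lemma TermOrder.exists_max (σ : TermOrder n) (S : Finset (Fin n →₀ ℕ)) (hS : S.Nonempty) :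
    ∃ M ∈ S, ∀ m ∈ S, σ.le m M := by
  classical
  induction S using Finset.induction with
  | empty => exact absurd hS (by simp)
  | @insert a S ha ih =>
    rcases S.eq_empty_or_nonempty with rfl | hne
    · exact ⟨a, by simp, by simpa using σ.le_refl a⟩
    · obtain ⟨M, hM, hmax⟩ := ih hne
      rcases σ.le_total a M with hle | hle
      · exact ⟨M, Finset.mem_insert_of_mem hM, by
          intro m hm
          rcases Finset.mem_insert.mp hm with rfl | hm
          · exact hle
          · exact hmax m hm⟩
      · exact ⟨a, Finset.mem_insert_self a S, by
          intro m hm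
          rcases Finset.mem_insert.mp hm with rfl | hm
          · exact σ.le_refl _
          · exact σ.le_trans _ _ _ (hmax m hm) hle⟩

/-- Leading terms are unique. -/
lemma TermOrder.isLeadingTerm_unique (σ : TermOrder n) {f : MvPolynomial (Fin n) K}
    {m₁ m₂ : Fin n →₀ ℕ} (h₁ : σ.IsLeadingTerm f m₁) (h₂ : σ.IsLeadingTerm f m₂) :
    m₁ = m₂ :=
  σ.le_antisymm _ _ (h₂.2 _ h₁.1) (h₁.2 _ h₂.1)

lemma not_occurs_coeff {p : MvPolynomial (Fin n) K} {k : Fin n} (hp : ¬ Occurs k p)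
    {m : Fin n →₀ ℕ} (hm : m k ≠ 0) : MvPolynomial.coeff m p = 0 := by
  by_contra hc
  exact hp ⟨m, MvPolynomial.mem_support_iff.mpr hc, hm⟩

/-- Given a `Z`-separating `σ`-Gröbner basis
`{(1/c_1)f_1,...,(1/c_s)f_s, g_1,...,g_t}` of `I`, replacing each `tail_{z_i}(f_i)`
by its normal form `h_i` with respect to `I ∩ K[X∖Z]` yields the reduced
`σ`-Gröbner basis `{z_1-h_1,...,z_s-h_s, g_1,...,g_t}` of `I`. -/
theorem statement10 (z : Fin s → Fin n) (f : Fin s → MvPolynomial (Fin n) K)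
    (I : Ideal (MvPolynomial (Fin n) K)) (hI : I ≤ linMaxIdeal (0 : Fin n → K))
    (hfI : ∀ i, f i ∈ I ∧ f i ≠ 0)
    (hcs : CoherentlySeparating z f) (σ : TermOrder n)
    (hlt : ∀ i, σ.IsLeadingTerm (f i) (Finsupp.single (z i) 1))
    (t : ℕ) (g : Fin t → MvPolynomial (Fin n) K)
    (hg : IsReducedGBOn σ (elimSet z I) (Set.range g))
    (hGB : IsGBOn σ (I : Set (MvPolynomial (Fin n) K))
      ((Set.range fun i =>
        (MvPolynomial.coeff (Finsupp.single (z i) 1) (f i))⁻¹ • f i) ∪ Set.range g))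
    (h : Fin s → MvPolynomial (Fin n) K)
    (hNF : ∀ i, IsNormalFormOn σ (elimSet z I) (tailTo (f i) (z i)) (h i)) :
    IsReducedGBOn σ (I : Set (MvPolynomial (Fin n) K))
      ((Set.range fun i => X (z i) - h i) ∪ Set.range g) := by
  classical
  obtain ⟨hzinj, hsep, hnocc⟩ := hcs
  have hcne : ∀ i, MvPolynomial.coeff (Finsupp.single (z i) 1) (f i) ≠ 0 :=
    fun i => (hsep i).2.1
  -- coefficient formula for the tail
  have htail_coeff : ∀ i m, MvPolynomial.coeff m (tailTo (f i) (z i)) =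
      (if Finsupp.single (z i) 1 = m then (1 : K) else 0) -
        (MvPolynomial.coeff (Finsupp.single (z i) 1) (f i))⁻¹ *
          MvPolynomial.coeff m (f i) := by
    intro i m
    simp [tailTo, MvPolynomial.coeff_sub, MvPolynomial.coeff_X', MvPolynomial.coeff_smul,
      smul_eq_mul]
  -- no indeterminate of Z occurs in any tail
  have htail_nz : ∀ i k m, m (z k) ≠ 0 → MvPolynomial.coeff m (tailTo (f i) (z i)) = 0 := by
    intro i k m hm
    by_cases hik : k = i
    · subst hik
      exact not_occurs_coeff (hsep k).2.2 hm
    · have hne : Finsupp.single (z i) 1 ≠ m := by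
        intro hEq
        apply hm
        rw [← hEq, Finsupp.single_apply, if_neg (fun hzz => hik (hzinj hzz).symm)]
      rw [htail_coeff, if_neg hne,
        not_occurs_coeff (hnocc k i (fun hEq => hik hEq.symm)) hm]
      ring
  have heI : ∀ i, tailTo (f i) (z i) - h i ∈ elimSet z I := fun i => (hNF i).1
  -- no indeterminate of Z occurs in any h i
  have hh_nz : ∀ i k m, m (z k) ≠ 0 → MvPolynomial.coeff m (h i) = 0 := by
    intro i k m hm
    have h1 := htail_nz i k m hm
    have h2 := not_occurs_coeff ((heI i).2 k) hm
    rw [MvPolynomial.coeff_sub] at h2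
    rw [h1, zero_sub, neg_eq_zero] at h2
    exact h2
  -- every monomial of the tail is σ-below z i
  have htail_le : ∀ i m, m ∈ (tailTo (f i) (z i)).support →
      σ.le m (Finsupp.single (z i) 1) := by
    intro i m hm
    by_cases hEq : Finsupp.single (z i) 1 = m
    · rw [← hEq]; exact σ.le_refl _
    · have := MvPolynomial.mem_support_iff.mp hm
      rw [htail_coeff, if_neg hEq] at this
      have hfm : MvPolynomial.coeff m (f i) ≠ 0 := by
        intro h0; rw [h0] at this; simp at this
      exact (hlt i).2 m (MvPolynomial.mem_support_iff.mpr hfm)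
  -- every monomial of h i is σ-below z i
  have hsup_h : ∀ i m, m ∈ (h i).support → σ.le m (Finsupp.single (z i) 1) := by
    intro i m hm
    by_contra hcon
    have hle : σ.le (Finsupp.single (z i) 1) m :=
      (σ.le_total _ _).resolve_left hcon
    set e := tailTo (f i) (z i) - h i with he
    have hmt : MvPolynomial.coeff m (tailTo (f i) (z i)) = 0 := by
      by_contra h0
      exact hcon (htail_le i m (MvPolynomial.mem_support_iff.mpr h0))
    have hme : m ∈ e.support := by
      rw [MvPolynomial.mem_support_iff, MvPolynomial.coeff_sub, hmt, zero_sub, neg_ne_zero]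
      exact MvPolynomial.mem_support_iff.mp hm
    obtain ⟨M, hMe, hMmax⟩ := σ.exists_max e.support ⟨m, hme⟩
    have hLTe : σ.IsLeadingTerm e M := ⟨hMe, hMmax⟩
    have hene : e ≠ 0 := fun h0 => by simp [h0] at hme
    have hmM : σ.le m M := hMmax m hme
    have hMt : MvPolynomial.coeff M (tailTo (f i) (z i)) = 0 := by
      by_contra h0
      exact hcon (σ.le_trans _ _ _ hmM (htail_le i M (MvPolynomial.mem_support_iff.mpr h0)))
    have hMh : M ∈ (h i).support := by
      rw [MvPolynomial.mem_support_iff]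
      have := MvPolynomial.mem_support_iff.mp hMe
      rw [MvPolynomial.coeff_sub, hMt, zero_sub, neg_ne_zero] at this
      exact this
    exact (hNF i).2 e (heI i) hene M M hLTe hMh (le_refl M)
  -- the leading term of X (z i) - h i
  have hsingle_not_h : ∀ i, MvPolynomial.coeff (Finsupp.single (z i) 1) (h i) = 0 := by
    intro i
    exact hh_nz i i (Finsupp.single (z i) 1) (by simp)
  have hcoeff_new : ∀ i m, MvPolynomial.coeff m (X (z i) - h i) =
      (if Finsupp.single (z i) 1 = m then (1 : K) else 0) - MvPolynomial.coeff m (h i) := by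
    intro i m
    simp [MvPolynomial.coeff_sub, MvPolynomial.coeff_X']
  have hsupp_split : ∀ i m, m ∈ (X (z i) - h i : MvPolynomial (Fin n) K).support →
      m = Finsupp.single (z i) 1 ∨ m ∈ (h i).support := by
    intro i m hm
    by_cases hEq : Finsupp.single (z i) 1 = m
    · exact Or.inl hEq.symm
    · right
      have := MvPolynomial.mem_support_iff.mp hm
      rw [hcoeff_new, if_neg hEq, zero_sub, neg_ne_zero] at this
      exact MvPolynomial.mem_support_iff.mpr this
  have hLT : ∀ i, σ.IsLeadingTerm (X (z i) - h i) (Finsupp.single (z i) 1) := by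
    intro i
    constructor
    · rw [MvPolynomial.mem_support_iff, hcoeff_new, if_pos rfl, hsingle_not_h]
      simp
    · intro m' hm'
      rcases hsupp_split i m' hm' with rfl | hm'h
      · exact σ.le_refl _
      · exact hsup_h i m' hm'h
  -- membership of the new elements in I
  have hmem : ∀ i, X (z i) - h i ∈ I := by
    intro i
    have hid : X (z i) - h i =
        MvPolynomial.C (MvPolynomial.coeff (Finsupp.single (z i) 1) (f i))⁻¹ * f i +
          (tailTo (f i) (z i) - h i) := by
      rw [tailTo, MvPolynomial.smul_eq_C_mul]; ring
    rw [hid]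
    exact I.add_mem (I.mul_mem_left _ (hfI i).1) (heI i).1
  have hgelim : ∀ j, g j ∈ elimSet z I := fun j => hg.1.1 ⟨j, rfl⟩
  have hgne : ∀ j, g j ≠ 0 := by
    intro j
    obtain ⟨m, hm, hc1⟩ := hg.2.1 (g j) ⟨j, rfl⟩
    intro h0
    rw [h0] at hc1
    simp at hc1
  -- elements of I have zero constant term
  have hconst : ∀ p ∈ I, MvPolynomial.coeff 0 p = 0 := by
    intro p hp
    have hp' : p ∈ linMaxIdeal (0 : Fin n → K) := hI hp
    have hker : linMaxIdeal (0 : Fin n → K) ≤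
        RingHom.ker (MvPolynomial.constantCoeff : MvPolynomial (Fin n) K →+* K) := by
      rw [linMaxIdeal, Ideal.span_le]
      rintro q ⟨i, rfl⟩
      simp [RingHom.mem_ker]
    have := hker hp'
    rwa [RingHom.mem_ker] at this
  refine ⟨⟨?_, ?_⟩, ?_, ?_⟩
  · -- the new set is contained in I
    rintro p (⟨i, rfl⟩ | ⟨j, rfl⟩)
    · exact hmem i
    · exact (hgelim j).1
  · -- Gröbner basis property
    intro p hp hpne
    obtain ⟨g', hg', mg, mf, hLTg, hLTp, hle⟩ := hGB.2 p hp hpne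
    rcases hg' with ⟨i, rfl⟩ | ⟨j, rfl⟩
    · have hLTs : σ.IsLeadingTerm
          ((MvPolynomial.coeff (Finsupp.single (z i) 1) (f i))⁻¹ • f i)
          (Finsupp.single (z i) 1) := by
        constructor
        · rw [MvPolynomial.mem_support_iff, MvPolynomial.coeff_smul, smul_eq_mul]
          exact mul_ne_zero (inv_ne_zero (hcne i)) (hcne i)
        · intro m' hm'
          have := MvPolynomial.mem_support_iff.mp hm'
          rw [MvPolynomial.coeff_smul, smul_eq_mul] at this
          exact (hlt i).2 m' (MvPolynomial.mem_support_iff.mpr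
            (fun h0 => this (by rw [h0, mul_zero])))
      have hmg : mg = Finsupp.single (z i) 1 := σ.isLeadingTerm_unique hLTg hLTs
      exact ⟨X (z i) - h i, Or.inl ⟨i, rfl⟩, Finsupp.single (z i) 1, mf, hLT i, hLTp,
        hmg ▸ hle⟩
    · exact ⟨g j, Or.inr ⟨j, rfl⟩, mg, mf, hLTg, hLTp, hle⟩
  · -- monic
    rintro p (⟨i, rfl⟩ | ⟨j, rfl⟩)
    · refine ⟨Finsupp.single (z i) 1, hLT i, ?_⟩
      rw [hcoeff_new, if_pos rfl, hsingle_not_h, sub_zero]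
    · exact hg.2.1 (g j) ⟨j, rfl⟩
  · -- interreduced
    rintro p (⟨i, rfl⟩ | ⟨l, rfl⟩) m hm p' (⟨k, rfl⟩ | ⟨j, rfl⟩) m' hm'LT hle
    · -- p = X z i - h i, p' = X z k - h k
      have hm' : m' = Finsupp.single (z k) 1 := σ.isLeadingTerm_unique hm'LT (hLT k)
      subst hm'
      rcases hsupp_split i m hm with rfl | hmh
      · have hk : (Finsupp.single (z k) 1 : Fin n →₀ ℕ) (z k) ≤
            (Finsupp.single (z i) 1 : Fin n →₀ ℕ) (z k) := hle (z k)
        rw [Finsupp.single_apply, if_pos rfl] at hk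
        have hzz : z i = z k := by
          by_contra hne
          rw [Finsupp.single_apply, if_neg hne] at hk
          omega
        have hki : k = i := hzinj hzz.symm
        subst hki
        exact ⟨rfl, rfl⟩
      · exfalso
        have hk : (1 : ℕ) ≤ m (z k) := by
          have := hle (z k)
          rwa [Finsupp.single_apply, if_pos rfl] at this
        exact MvPolynomial.mem_support_iff.mp hmh (hh_nz i k m (by omega))
    · -- p = X z i - h i, p' = g j
      exfalso
      rcases hsupp_split i m hm with rfl | hmh
      · -- m' ≤ single (z i) 1 forces m' = 0
        have hm'0 : m' = 0 := by
          ext x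
          simp only [Finsupp.coe_zero, Pi.zero_apply]
          have hx := hle x
          by_cases hxz : x = z i
          · subst hxz
            by_contra h0
            exact MvPolynomial.mem_support_iff.mp hm'LT.1
              (not_occurs_coeff ((hgelim j).2 i) h0)
          · rw [Finsupp.single_apply, if_neg (fun hEq => hxz hEq.symm)] at hx
            omega
        rw [hm'0] at hm'LT
        exact MvPolynomial.mem_support_iff.mp hm'LT.1 (hconst (g j) (hgelim j).1)
      · exact (hNF i).2 (g j) (hgelim j) (hgne j) m' m hm'LT hmh hle
    · -- p = g l, p' = X z k - h k
      exfalso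
      have hm' : m' = Finsupp.single (z k) 1 := σ.isLeadingTerm_unique hm'LT (hLT k)
      subst hm'
      have hk : (1 : ℕ) ≤ m (z k) := by
        have := hle (z k)
        rwa [Finsupp.single_apply, if_pos rfl] at this
      exact MvPolynomial.mem_support_iff.mp hm
        (not_occurs_coeff ((hgelim l).2 k) (by omega))
    · -- p = g l, p' = g j
      exact hg.2.2 (g l) ⟨l, rfl⟩ m hm (g j) ⟨j, rfl⟩ m' hm'LT hle
end

section
/- (Z-Separating Re-embedding) Let I ⊆ M = ⟨x_1,...,x_n⟩ be an ideal with a Z-separating σ-Gröbner basis { (1/c_1)f_1, ..., (1/c_s)f_s, g_1,...,g_t } for Z = {z_1,...,z_s}, and let P̂ = K[X∖Z]. Define the K-algebra homomorphism φ: P → P̂ by φ(x_i) = x_i if x_i ∉ Z and φ(z_j) = tail_{z_j}(f_j). Then the composition of φ with the projection P̂ → P̂/(I ∩ P̂) has kernel exactly I, and hence φ induces a K-algebra isomorphism Φ: P/I ≅ P̂/(I ∩ P̂). -/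
open MvPolynomial

variable {K : Type*} [Field K] {n s : ℕ}

/-! The substitution `φ` is congruent to the identity modulo `I`, because
`z_j - tail_{z_j}(f_j) = f_j / c_j ∈ I`. Coherent separation puts every `φ(x_i)` in
`P̂ = K[X∖Z]`, and `φ` fixes `P̂` pointwise. Hence `ψ(p) = 0` iff `φ(p) ∈ I ∩ P̂` iff `p ∈ I`,
and `ψ` is onto since on `P̂` it is just the projection. -/

namespace MvPolynomial

variable {R ι : Type*} [CommRing R]

theorem mkₐ_comp_aeval_of_sub_X_mem {I : Ideal (MvPolynomial ι R)} {φ : ι → MvPolynomial ι R}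
    (hφ : ∀ i, φ i - X i ∈ I) :
    (Ideal.Quotient.mkₐ R I).comp (aeval φ) = Ideal.Quotient.mkₐ R I :=
  algHom_ext fun i => by simpa [Ideal.Quotient.mk_eq_mk_iff_sub_mem] using hφ i

theorem aeval_mem_iff_of_sub_X_mem {I : Ideal (MvPolynomial ι R)} {φ : ι → MvPolynomial ι R}
    (hφ : ∀ i, φ i - X i ∈ I) (p : MvPolynomial ι R) : aeval φ p ∈ I ↔ p ∈ I := by
  have hmk : Ideal.Quotient.mk I (aeval φ p) = Ideal.Quotient.mk I p :=
    congr($(mkₐ_comp_aeval_of_sub_X_mem hφ) p)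
  rw [← Ideal.Quotient.eq_zero_iff_mem, hmk, Ideal.Quotient.eq_zero_iff_mem]

theorem aeval_mem_supported {κ : Type*} {t : Set κ} {φ : ι → MvPolynomial κ R}
    (hφ : ∀ i, φ i ∈ supported R t) (p : MvPolynomial ι R) : aeval φ p ∈ supported R t := by
  have hrange : (aeval φ).range ≤ supported R t := by
    rw [aeval_range]
    exact Algebra.adjoin_le (Set.range_subset_iff.2 hφ)
  exact hrange (AlgHom.mem_range_self _ p)

end MvPolynomial

theorem tailTo_sub_X_mem {I : Ideal (MvPolynomial (Fin n) K)} {p : MvPolynomial (Fin n) K}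
    (hp : p ∈ I) (i : Fin n) : tailTo p i - X i ∈ I := by
  rw [tailTo, sub_sub_cancel_left, smul_eq_C_mul]
  exact I.neg_mem (I.mul_mem_left _ hp)

theorem not_occurs_iff_mem_supported {i : Fin n} {p : MvPolynomial (Fin n) K} :
    ¬ Occurs i p ↔ p ∈ supported K {i}ᶜ := by
  simp [Occurs, mem_supported, Set.subset_compl_singleton_iff, mem_vars_iff_mem_support]

theorem mem_supported_compl_range_iff {z : Fin s → Fin n} {p : MvPolynomial (Fin n) K} :
    p ∈ supported K (Set.range z)ᶜ ↔ ∀ j, ¬ Occurs (z j) p := by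
  simp only [not_occurs_iff_mem_supported, mem_supported, Set.subset_compl_comm,
    Set.range_subset_iff, Set.subset_compl_singleton_iff, Set.mem_compl_iff]

section Reembedding

variable {z : Fin s → Fin n} {f : Fin s → MvPolynomial (Fin n) K}

theorem CoherentlySeparating.tailTo_mem_supported (hcs : CoherentlySeparating z f) (j : Fin s) :
    tailTo (f j) (z j) ∈ supported K (Set.range z)ᶜ := by
  rw [mem_supported_compl_range_iff]
  intro k
  by_cases hkj : k = j
  · subst hkj
    exact (hcs.2.1 k).2.2
  · rw [not_occurs_iff_mem_supported, tailTo]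
    refine Subalgebra.sub_mem _ (X_mem_supported.2 (hcs.1.ne (Ne.symm hkj))) ?_
    exact Subalgebra.smul_mem _ (not_occurs_iff_mem_supported.1 (hcs.2.2 k j (Ne.symm hkj))) _

theorem CoherentlySeparating.subMap_mem_supported (hcs : CoherentlySeparating z f) (i : Fin n) :
    subMap z f i ∈ supported K (Set.range z)ᶜ := by
  unfold subMap
  split_ifs with h
  · exact hcs.tailTo_mem_supported _
  · exact X_mem_supported.2 h

theorem subMap_sub_X_mem {I : Ideal (MvPolynomial (Fin n) K)} (hfI : ∀ j, f j ∈ I) (i : Fin n) :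
    subMap z f i - X i ∈ I := by
  unfold subMap
  split_ifs with h
  · have hj : z h.choose = i := h.choose_spec
    simpa only [hj] using tailTo_sub_X_mem (hfI h.choose) (z h.choose)
  · simp

theorem subMap_of_not_mem_range {i : Fin n} (hi : ¬ ∃ j, z j = i) : subMap z f i = X i :=
  dif_neg hi

theorem aeval_subMap_rename (q : MvPolynomial {i : Fin n // ¬ ∃ j, z j = i} K) :
    aeval (subMap z f) (rename Subtype.val q) = rename Subtype.val q := by
  have hval : subMap z f ∘ (Subtype.val : {i : Fin n // ¬ ∃ j, z j = i} → Fin n) =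
      X ∘ Subtype.val :=
    funext fun i => subMap_of_not_mem_range i.2
  rw [aeval_rename, hval, rename_eq_aeval]

end Reembedding

section Projection

variable {z : Fin s → Fin n}

theorem killZ_comp_rename :
    (killZ (K := K) z).comp (rename Subtype.val) = AlgHom.id K _ :=
  algHom_ext fun i => by simp [killZ, dif_neg i.2]

theorem killZ_rename (q : MvPolynomial {i : Fin n // ¬ ∃ j, z j = i} K) :
    killZ z (rename Subtype.val q) = q :=
  congr($killZ_comp_rename q)

theorem rename_killZ_of_mem_supported {p : MvPolynomial (Fin n) K}
    (hp : p ∈ supported K (Set.range z)ᶜ) : rename Subtype.val (killZ z p) = p := by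
  rw [supported_eq_range_rename] at hp
  obtain ⟨q, rfl⟩ := hp
  exact congrArg (rename Subtype.val) (killZ_rename q)

end Projection

theorem reembedHom_apply (z : Fin s → Fin n) (f : Fin s → MvPolynomial (Fin n) K)
    (I : Ideal (MvPolynomial (Fin n) K)) (p : MvPolynomial (Fin n) K) :
    reembedHom z f I p = Ideal.Quotient.mk _ (killZ z (aeval (subMap z f) p)) :=
  rfl

theorem statement11_general (z : Fin s → Fin n) (f : Fin s → MvPolynomial (Fin n) K)
    (I : Ideal (MvPolynomial (Fin n) K))
    (hfI : ∀ i, f i ∈ I ∧ f i ≠ 0)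
    (hcs : CoherentlySeparating z f) :
    RingHom.ker (reembedHom z f I) = I ∧
    Function.Surjective (reembedHom z f I) := by
  have hsub : ∀ i, subMap z f i - X i ∈ I := subMap_sub_X_mem fun j => (hfI j).1
  refine ⟨?_, ?_⟩
  · ext p
    have hφp : rename Subtype.val (killZ z (aeval (subMap z f) p)) = aeval (subMap z f) p :=
      rename_killZ_of_mem_supported (aeval_mem_supported hcs.subMap_mem_supported p)
    rw [RingHom.mem_ker, reembedHom_apply, Ideal.Quotient.eq_zero_iff_mem, elimIdeal,
      Ideal.mem_comap, AlgHom.toRingHom_eq_coe, RingHom.coe_coe, hφp,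
      aeval_mem_iff_of_sub_X_mem hsub]
  · intro y
    obtain ⟨q, rfl⟩ := Ideal.Quotient.mk_surjective y
    exact ⟨rename Subtype.val q, by rw [reembedHom_apply, aeval_subMap_rename, killZ_rename]⟩

/-- **The `Z`-Separating Re-embedding.** The composition
`ψ : P → P̂ → P̂/(I ∩ P̂)` of the substitution `x_i ↦ x_i` (`x_i ∉ Z`),
`z_j ↦ tail_{z_j}(f_j)` with the canonical projection has kernel exactly `I` and is
surjective; hence it induces a `K`-algebra isomorphism `P/I ≅ P̂/(I ∩ P̂)`. -/
theorem statement11 (z : Fin s → Fin n) (f : Fin s → MvPolynomial (Fin n) K)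
    (I : Ideal (MvPolynomial (Fin n) K)) (hI : I ≤ linMaxIdeal (0 : Fin n → K))
    (hfI : ∀ i, f i ∈ I ∧ f i ≠ 0)
    (hcs : CoherentlySeparating z f) (σ : TermOrder n)
    (hlt : ∀ i, σ.IsLeadingTerm (f i) (Finsupp.single (z i) 1))
    (t : ℕ) (g : Fin t → MvPolynomial (Fin n) K)
    (hg : IsReducedGBOn σ (elimSet z I) (Set.range g))
    (hGB : IsGBOn σ (I : Set (MvPolynomial (Fin n) K))
      ((Set.range fun i =>
        (MvPolynomial.coeff (Finsupp.single (z i) 1) (f i))⁻¹ • f i) ∪ Set.range g)) :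
    RingHom.ker (reembedHom z f I) = I ∧
    Function.Surjective (reembedHom z f I) :=
  statement11_general z f I hfI hcs
end

section
/- Let I ⊆ M = ⟨x_1,...,x_n⟩ be an ideal and Z ⊆ X a set of indeterminates. If σ and σ' are two Z-separating term orderings for I, then the induced K-algebra isomorphisms Φ, Φ': P/I → P̂/(I ∩ P̂) coincide. In other words, the Z-separating re-embedding depends only on Z, not on the choice of the Z-separating term ordering. -/
open MvPolynomial

variable {K : Type*} [Field K] {n s : ℕ}

section Aux
open MvPolynomial
variable {K : Type*} [Field K] {n s : ℕ}

private lemma killZ_rename_aux (z : Fin s → Fin n)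
    (q : MvPolynomial {i : Fin n // ¬ ∃ j, z j = i} K) :
    killZ z (rename (Subtype.val) q) = q := by
  rw [killZ, aeval_rename]
  have h : ((fun i : Fin n => if h : ∃ j, z j = i then (0 : MvPolynomial {i : Fin n // ¬ ∃ j, z j = i} K) else X ⟨i, h⟩) ∘ Subtype.val) = X := by
    funext i
    simp only [Function.comp_apply]
    rw [dif_neg i.2]
  rw [h, aeval_X_left, AlgHom.id_apply]

private lemma tail_noOccurs_aux (z : Fin s → Fin n) (f : Fin s → MvPolynomial (Fin n) K)
    (hcs : CoherentlySeparating z f) (j k : Fin s) :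
    ¬ Occurs (z k) (tailTo (f j) (z j)) := by
  by_cases hkj : k = j
  · subst hkj; exact ((hcs.2.1 k).2).2
  · rintro ⟨m, hm, hmz⟩
    have hsub := MvPolynomial.support_sub (Fin n) (X (z j))
      ((MvPolynomial.coeff (Finsupp.single (z j) 1) (f j))⁻¹ • f j) hm
    rw [Finset.mem_union] at hsub
    rcases hsub with h1 | h2
    · rw [support_X, Finset.mem_singleton] at h1
      subst h1
      have : z k ≠ z j := fun h => hkj (hcs.1 h)
      simp [Finsupp.single_apply, this.symm] at hmz
    · exact hcs.2.2 k j (fun h => hkj h.symm) ⟨m, Finsupp.support_smul h2, hmz⟩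

end Aux

/-- The `Z`-separating re-embedding does not depend on the choice
of the `Z`-separating term ordering: two `Z`-separating term orderings `σ, σ'` with
coherently `Z`-separating tuples `f, f'` in `I` induce the same homomorphism
`P → P̂/(I ∩ P̂)`, hence the same isomorphism `Φ : P/I → P̂/(I ∩ P̂)`. -/
theorem statement13 (z : Fin s → Fin n)
    (f f' : Fin s → MvPolynomial (Fin n) K)
    (I : Ideal (MvPolynomial (Fin n) K)) (hI : I ≤ linMaxIdeal (0 : Fin n → K))
    (σ σ' : TermOrder n)
    (hf : ∀ i, f i ∈ I ∧ f i ≠ 0 ∧ σ.IsLeadingTerm (f i) (Finsupp.single (z i) 1))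
    (hf' : ∀ i, f' i ∈ I ∧ f' i ≠ 0 ∧ σ'.IsLeadingTerm (f' i) (Finsupp.single (z i) 1))
    (hcs : CoherentlySeparating z f) (hcs' : CoherentlySeparating z f') :
    reembedHom z f I = reembedHom z f' I := by
  apply MvPolynomial.ringHom_ext
  · intro r
    simp [reembedHom]
  · intro i
    simp only [reembedHom, RingHom.comp_apply, AlgHom.toRingHom_eq_coe, RingHom.coe_coe,
      AlgHom.coe_comp, Function.comp_apply, MvPolynomial.aeval_X]
    unfold subMap
    by_cases h : ∃ j, z j = i
    · rw [dif_pos h, dif_pos h]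
      set j := h.choose with hjdef
      rw [Ideal.Quotient.eq, ← map_sub]
      set d := tailTo (f j) (z j) - tailTo (f' j) (z j) with hd
      have hdI : d ∈ I := by
        have : d = MvPolynomial.C ((MvPolynomial.coeff (Finsupp.single (z j) 1) (f' j))⁻¹) * f' j
            - MvPolynomial.C ((MvPolynomial.coeff (Finsupp.single (z j) 1) (f j))⁻¹) * f j := by
          simp only [hd, tailTo, MvPolynomial.smul_eq_C_mul]
          ring
        rw [this]
        exact I.sub_mem (I.mul_mem_left _ (hf' j).1) (I.mul_mem_left _ (hf j).1)
      have hnoz : ∀ k, ¬ Occurs (z k) d := by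
        intro k ⟨m, hm, hmz⟩
        have hsub := MvPolynomial.support_sub (Fin n) (tailTo (f j) (z j)) (tailTo (f' j) (z j)) hm
        rw [Finset.mem_union] at hsub
        rcases hsub with h1 | h2
        · exact tail_noOccurs_aux z f hcs j k ⟨m, h1, hmz⟩
        · exact tail_noOccurs_aux z f' hcs' j k ⟨m, h2, hmz⟩
      have hvars : (d.vars : Set (Fin n)) ⊆
          Set.range (Subtype.val : {i : Fin n // ¬ ∃ j, z j = i} → Fin n) := by
        intro v hv
        by_cases hvz : ∃ k, z k = v
        · exfalso
          obtain ⟨k, rfl⟩ := hvz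
          obtain ⟨m, hm, hmv⟩ := (MvPolynomial.mem_vars _).mp hv
          exact hnoz k ⟨m, hm, Finsupp.mem_support_iff.mp hmv⟩
        · exact ⟨⟨v, hvz⟩, rfl⟩
      obtain ⟨q, hq⟩ := MvPolynomial.exists_rename_eq_of_vars_subset_range d
        (Subtype.val : {i : Fin n // ¬ ∃ j, z j = i} → Fin n) Subtype.val_injective hvars
      rw [← hq, killZ_rename_aux]
      show q ∈ elimIdeal z I
      rw [elimIdeal, Ideal.mem_comap]
      show MvPolynomial.rename Subtype.val q ∈ I
      rw [hq]
      exact hdI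
    · rw [dif_neg h, dif_neg h]
end

section
/- Let I ⊆ M = ⟨x_1,...,x_n⟩ be an ideal and let G be a reduced Gröbner basis of I with respect to some term ordering σ. Then the number of elements of G whose σ-leading term is an indeterminate is at most dim_K(Lin_M(I)). -/
open MvPolynomial

variable {K : Type*} [Field K] {n s : ℕ}

/-! An element `g` of a reduced Gröbner basis whose leading term is an indeterminate `z` has
coefficient `1` at `z`, while `z`, being a leading term, occurs in no other element of the
basis. Hence the coefficient functionals at these indeterminates are dual to the linear parts
of these elements, which are therefore linearly independent in `Lin_M(I)`. -/

theorem Set.ncard_le_finrank_of_linearIndependent {R V ι : Type*} [Ring R]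
    [StrongRankCondition R] [AddCommGroup V] [Module R V] [Module.Finite R V]
    {s : Set ι} {v : s → V} (hv : LinearIndependent R v) : s.ncard ≤ Module.finrank R V := by
  have : Fintype s := @Fintype.ofFinite _ hv.finite
  rw [← Nat.card_coe_set_eq, Nat.card_eq_fintype_card]
  exact hv.fintype_card_le_finrank

theorem TermOrder.IsLeadingTerm.unique {σ : TermOrder n} {f : MvPolynomial (Fin n) K}
    {m m' : Fin n →₀ ℕ} (h : σ.IsLeadingTerm f m) (h' : σ.IsLeadingTerm f m') : m = m' :=
  σ.le_antisymm _ _ (h'.2 m h.1) (h.2 m' h'.1)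

section ReducedGB

variable {σ : TermOrder n} {S G : Set (MvPolynomial (Fin n) K)}

theorem IsReducedGBOn.coeff_leadingTerm (hG : IsReducedGBOn σ S G)
    {g : MvPolynomial (Fin n) K} {m : Fin n →₀ ℕ} (hg : g ∈ G) (hm : σ.IsLeadingTerm g m) :
    coeff m g = 1 := by
  obtain ⟨m', hm', hc⟩ := hG.2.1 g hg
  rwa [hm'.unique hm] at hc

theorem IsReducedGBOn.coeff_leadingTerm_of_ne (hG : IsReducedGBOn σ S G)
    {g h : MvPolynomial (Fin n) K} {m : Fin n →₀ ℕ} (hg : g ∈ G) (hh : h ∈ G)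
    (hgh : g ≠ h) (hm : σ.IsLeadingTerm h m) : coeff m g = 0 := by
  by_contra hc
  exact hgh (hG.2.2 g hg m (mem_support_iff.mpr hc) h hh m hm le_rfl).1.symm

end ReducedGB

theorem linPart_mem_linForms (a : Fin n → K) (f : MvPolynomial (Fin n) K) :
    linPart a f ∈ linForms a := by
  have h := homogeneousComponent_mem 1 ((aeval fun i => X i + C (a i)) f)
  rw [homogeneousSubmodule_one_eq_span_X] at h
  have := Submodule.mem_map_of_mem (f := (aeval fun i => X i - C (a i) :
    MvPolynomial (Fin n) K →ₐ[K] _).toLinearMap) h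
  rw [Submodule.map_span, ← Set.range_comp] at this
  simpa only [linPart, linForms, Function.comp_def, AlgHom.toLinearMap_apply, aeval_X] using this

theorem linSpace_le_linForms (a : Fin n → K) (I : Ideal (MvPolynomial (Fin n) K)) :
    linSpace a I ≤ linForms a :=
  Submodule.span_le.mpr <| Set.image_subset_iff.mpr fun f _ => linPart_mem_linForms a f

instance (a : Fin n → K) : FiniteDimensional K (linForms a) :=
  FiniteDimensional.span_of_finite K (Set.finite_range _)

instance (a : Fin n → K) (I : Ideal (MvPolynomial (Fin n) K)) :
    FiniteDimensional K (linSpace a I) :=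
  Submodule.finiteDimensional_of_le (linSpace_le_linForms a I)

theorem coeff_single_linPart_zero (f : MvPolynomial (Fin n) K) (i : Fin n) :
    coeff (Finsupp.single i 1) (linPart 0 f) = coeff (Finsupp.single i 1) f := by
  simp [linPart, coeff_homogeneousComponent, Finsupp.degree_single]

theorem statement14_general (I : Ideal (MvPolynomial (Fin n) K))
    (σ : TermOrder n)
    (G : Set (MvPolynomial (Fin n) K))
    (hG : IsReducedGBOn σ (I : Set (MvPolynomial (Fin n) K)) G) :
    Set.ncard {g | g ∈ G ∧ ∃ i : Fin n, σ.IsLeadingTerm g (Finsupp.single i 1)} ≤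
      Module.finrank K ↥(linSpace (0 : Fin n → K) I) := by
  set T := {g | g ∈ G ∧ ∃ i : Fin n, σ.IsLeadingTerm g (Finsupp.single i 1)}
  choose z hz using fun g : T => g.2.2
  let lin (g : T) : linSpace 0 I :=
    ⟨linPart 0 g, Submodule.subset_span ⟨g, hG.1.1 g.2.1, rfl⟩⟩
  let coord (h : T) : Module.Dual K (linSpace 0 I) :=
    (lcoeff K (Finsupp.single (z h) 1)).comp (linSpace 0 I).subtype
  have hli : LinearIndependent K lin := by
    refine .of_pairwise_dual_eq_zero_one lin coord (fun h g hhg => ?_) (fun g => ?_)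
    · simpa [coord, lin, coeff_single_linPart_zero] using
        hG.coeff_leadingTerm_of_ne g.2.1 h.2.1 (fun e => hhg (Subtype.ext e).symm) (hz h)
    · simpa [coord, lin, coeff_single_linPart_zero] using hG.coeff_leadingTerm g.2.1 (hz g)
  exact Set.ncard_le_finrank_of_linearIndependent hli

/-- For a reduced `σ`-Gröbner basis `G` of `I ⊆ M = ⟨x_1,...,x_n⟩`,
the number of elements of `G` whose `σ`-leading term is an indeterminate is at most
`dim_K Lin_M(I)`. -/
theorem statement14 (I : Ideal (MvPolynomial (Fin n) K))
    (hI : I ≤ linMaxIdeal (0 : Fin n → K)) (σ : TermOrder n)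
    (G : Set (MvPolynomial (Fin n) K))
    (hG : IsReducedGBOn σ (I : Set (MvPolynomial (Fin n) K)) G) :
    Set.ncard {g | g ∈ G ∧ ∃ i : Fin n, σ.IsLeadingTerm g (Finsupp.single i 1)} ≤
      Module.finrank K ↥(linSpace (0 : Fin n → K) I) :=
  statement14_general I σ G hG
end

section
/- Let I ⊆ M = ⟨x_1,...,x_n⟩ be an ideal and suppose there is a Z-separating re-embedding Φ: P/I → P̂/(I ∩ P̂) with I ∩ P̂ = ⟨0⟩, i.e., P/I ≅ P̂ is a polynomial ring in n - #Z indeterminates. Then edim(P/I) = n - #Z and Φ is an optimal re-embedding. -/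
open MvPolynomial

variable {K : Type*} [Field K] {n s : ℕ}

open TensorProduct in
lemma aux_le {K : Type*} [Field K] {d m : ℕ} (I' : Ideal (MvPolynomial (Fin m) K))
    (e : MvPolynomial (Fin d) K ≃ₐ[K] MvPolynomial (Fin m) K ⧸ I') : d ≤ m := by
  let ψ : MvPolynomial (Fin m) K →ₐ[K] MvPolynomial (Fin d) K :=
    e.symm.toAlgHom.comp (Ideal.Quotient.mkₐ K I')
  have hψ : Function.Surjective ψ := e.symm.surjective.comp (Ideal.Quotient.mkₐ_surjective K I')
  letI : Algebra (MvPolynomial (Fin m) K) (MvPolynomial (Fin d) K) := ψ.toRingHom.toAlgebra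
  haveI : IsScalarTower K (MvPolynomial (Fin m) K) (MvPolynomial (Fin d) K) :=
    IsScalarTower.of_algebraMap_eq fun x => (ψ.commutes x).symm
  have hs : Function.Surjective (algebraMap (MvPolynomial (Fin m) K) (MvPolynomial (Fin d) K)) := hψ
  have h1 := KaehlerDifferential.mapBaseChange_surjective K
    (MvPolynomial (Fin m) K) (MvPolynomial (Fin d) K) hs
  have hd := (KaehlerDifferential.mvPolynomialBasis K (Fin d)).mk_eq_rank
  have hm := ((KaehlerDifferential.mvPolynomialBasis K (Fin m)).baseChange
      (MvPolynomial (Fin d) K)).mk_eq_rank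
  have h2 := Cardinal.lift_le.mpr ((KaehlerDifferential.mapBaseChange K (MvPolynomial (Fin m) K)
    (MvPolynomial (Fin d) K)).rank_le_of_surjective h1)
  rw [← hd, ← hm] at h2
  simpa using h2

set_option synthInstance.maxHeartbeats 1000000 in
set_option maxHeartbeats 1000000 in
/-- If the `Z`-separating re-embedding of `I ⊆ M` has trivial
elimination ideal `I ∩ P̂ = ⟨0⟩`, i.e. `P/I` is isomorphic to a polynomial ring in
`n - #Z` indeterminates, then `edim(P/I) = n - #Z` and the re-embedding is
optimal. -/
theorem statement19 (z : Fin s → Fin n) (f : Fin s → MvPolynomial (Fin n) K)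
    (I : Ideal (MvPolynomial (Fin n) K)) (hI : I ≤ linMaxIdeal (0 : Fin n → K))
    (hfI : ∀ i, f i ∈ I ∧ f i ≠ 0)
    (hcs : CoherentlySeparating z f)
    (hker : RingHom.ker (reembedHom z f I) = I)
    (hsurj : Function.Surjective (reembedHom z f I))
    (htriv : elimIdeal z I = ⊥) :
    edim K (MvPolynomial (Fin n) K ⧸ I) = n - s := by
  classical
  -- the re-embedding as an algebra homomorphism
  let ψ0 : MvPolynomial (Fin n) K →ₐ[K]
      (MvPolynomial {i : Fin n // ¬ ∃ j, z j = i} K ⧸ elimIdeal z I) :=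
    (Ideal.Quotient.mkₐ K (elimIdeal z I)).comp
      ((killZ z).comp (MvPolynomial.aeval (subMap z f)))
  have hfun : ∀ x, ψ0 x = reembedHom z f I x := fun x => rfl
  have hker' : RingHom.ker ψ0 = I := by
    ext x; rw [RingHom.mem_ker, hfun, ← RingHom.mem_ker, hker]
  have hsurj' : Function.Surjective ψ0 := hsurj
  -- the quotient P/I is isomorphic to P̂
  let e1 : (MvPolynomial (Fin n) K ⧸ I) ≃ₐ[K]
      (MvPolynomial {i : Fin n // ¬ ∃ j, z j = i} K ⧸ elimIdeal z I) :=
    (Ideal.quotientEquivAlgOfEq K hker'.symm).trans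
      (Ideal.quotientKerAlgEquivOfSurjective hsurj')
  have hbot : elimIdeal z I =
      RingHom.ker (AlgHom.id K (MvPolynomial {i : Fin n // ¬ ∃ j, z j = i} K)) := by
    rw [htriv]; ext x; simp [RingHom.mem_ker]
  let e2 : (MvPolynomial {i : Fin n // ¬ ∃ j, z j = i} K ⧸ elimIdeal z I) ≃ₐ[K]
      MvPolynomial {i : Fin n // ¬ ∃ j, z j = i} K :=
    (Ideal.quotientEquivAlgOfEq K hbot).trans
      (Ideal.quotientKerAlgEquivOfSurjective Function.surjective_id)
  -- P̂ is a polynomial ring in n - s indeterminates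
  have hcard2 : Fintype.card {i : Fin n // ∃ j, z j = i} = s := by
    rw [Fintype.card_congr (Equiv.ofBijective (fun j : Fin s => (⟨z j, j, rfl⟩ :
        {i : Fin n // ∃ j, z j = i})) ⟨fun a b hab => hcs.1 (Subtype.mk_eq_mk.mp hab),
        fun ⟨i, j, hj⟩ => ⟨j, Subtype.ext hj⟩⟩).symm, Fintype.card_fin]
  have hcard : Fintype.card {i : Fin n // ¬ ∃ j, z j = i} = n - s := by
    rw [Fintype.card_subtype_compl, hcard2, Fintype.card_fin]
  let e3 : MvPolynomial {i : Fin n // ¬ ∃ j, z j = i} K ≃ₐ[K]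
      MvPolynomial (Fin (n - s)) K :=
    MvPolynomial.renameEquiv K (Fintype.equivFinOfCardEq hcard)
  let eqv : (MvPolynomial (Fin n) K ⧸ I) ≃ₐ[K] MvPolynomial (Fin (n - s)) K :=
    e1.trans (e2.trans e3)
  have hbot2 : (⊥ : Ideal (MvPolynomial (Fin (n - s)) K)) =
      RingHom.ker (AlgHom.id K (MvPolynomial (Fin (n - s)) K)) := by
    ext x; simp [RingHom.mem_ker]
  let e4 : MvPolynomial (Fin (n - s)) K ≃ₐ[K]
      (MvPolynomial (Fin (n - s)) K ⧸ (⊥ : Ideal (MvPolynomial (Fin (n - s)) K))) :=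
    ((Ideal.quotientEquivAlgOfEq K hbot2).trans
      (Ideal.quotientKerAlgEquivOfSurjective Function.surjective_id)).symm
  have hmem : n - s ∈ {m | ∃ I' : Ideal (MvPolynomial (Fin m) K),
      Nonempty ((MvPolynomial (Fin n) K ⧸ I) ≃ₐ[K] (MvPolynomial (Fin m) K ⧸ I'))} :=
    ⟨⊥, ⟨eqv.trans e4⟩⟩
  refine le_antisymm (Nat.sInf_le hmem) (le_csInf ⟨_, hmem⟩ ?_)
  rintro m ⟨I', ⟨e⟩⟩
  exact aux_le I' (eqv.symm.trans e)
end
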